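/- arXiv:2004.00507 — 7 statements merged into one kernel-verified Lean document; each statement's English description precedes it below -/
import Mathlib

section
/- Let f : ℝ × ℝ → ℝ, c ∈ ℝ, and let P : (0,∞) → (0,∞) satisfy f(P(x), x) = c for all x > 0. Suppose that f is concave on the convex set (0,∞) × (0,∞) (jointly in both arguments) and that, for each fixed second argument in (0,∞), f is strictly increasing in its first argument on (0,∞). Then P is convex on (0,∞): for all x₁, x₂ > 0 and t ∈ [0,1], P(t·x₁ + (1−t)·x₂) ≤ t·P(x₁) + (1−t)·P(x₂). -/
/-- Condition 2 of Proposition 1: if `f` is jointly concave on `(0,∞) × (0,∞)` and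
strictly increasing in its first argument, and `P x` solves `f (P x, x) = c` for every
`x > 0`, then the required power `P` is convex on `(0,∞)`. -/
theorem required_power_convex
    (f : ℝ × ℝ → ℝ) (c : ℝ) (P : ℝ → ℝ)
    (hPpos : ∀ x, 0 < x → 0 < P x)
    (hPc : ∀ x, 0 < x → f (P x, x) = c)
    (hconc : ConcaveOn ℝ (Set.Ioi (0 : ℝ) ×ˢ Set.Ioi (0 : ℝ)) f)
    (hmono1 : ∀ y, 0 < y → ∀ p₁ p₂, 0 < p₁ → p₁ < p₂ → f (p₁, y) < f (p₂, y)) :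
    ∀ x₁ x₂, 0 < x₁ → 0 < x₂ → ∀ t : ℝ, 0 ≤ t → t ≤ 1 →
      P (t * x₁ + (1 - t) * x₂) ≤ t * P x₁ + (1 - t) * P x₂ := by
  intro x₁ x₂ hx₁ hx₂ t ht0 ht1
  set s := 1 - t with hs
  have hs0 : 0 ≤ s := by linarith
  have hts : t + s = 1 := by ring
  have hx : 0 < t * x₁ + s * x₂ := by
    rcases eq_or_lt_of_le ht0 with h | h
    · simp [← h, hs]; linarith [mul_pos (show (0:ℝ) < 1 - t by linarith) hx₂]
    · nlinarith [mul_nonneg hs0 hx₂.le, mul_pos h hx₁]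
  have hQ : 0 < t * P x₁ + s * P x₂ := by
    have hts' : 0 < t ∨ 0 < s := by
      by_contra h; push_neg at h; linarith [h.1, h.2]
    rcases hts' with h | h
    · nlinarith [mul_nonneg hs0 (hPpos x₂ hx₂).le, mul_pos h (hPpos x₁ hx₁)]
    · nlinarith [mul_nonneg ht0 (hPpos x₁ hx₁).le, mul_pos h (hPpos x₂ hx₂)]
  have hmem₁ : (P x₁, x₁) ∈ Set.Ioi (0:ℝ) ×ˢ Set.Ioi (0:ℝ) :=
    ⟨hPpos x₁ hx₁, hx₁⟩
  have hmem₂ : (P x₂, x₂) ∈ Set.Ioi (0:ℝ) ×ˢ Set.Ioi (0:ℝ) :=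
    ⟨hPpos x₂ hx₂, hx₂⟩
  have hcomb := hconc.2 hmem₁ hmem₂ ht0 hs0 hts
  have hsmul : t • ((P x₁, x₁) : ℝ × ℝ) + s • (P x₂, x₂)
      = (t * P x₁ + s * P x₂, t * x₁ + s * x₂) := by
    simp [Prod.ext_iff, smul_eq_mul]
  rw [hsmul, hPc x₁ hx₁, hPc x₂ hx₂] at hcomb
  have hc : c ≤ f (t * P x₁ + s * P x₂, t * x₁ + s * x₂) := by
    have hcc : t * c + s * c = c := by rw [← add_mul, hts, one_mul]
    simp only [smul_eq_mul] at hcomb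
    linarith
  by_contra hlt
  push_neg at hlt
  have := hmono1 _ hx _ _ hQ hlt
  rw [hPc _ hx] at this
  linarith
end

section
/- Let f : ℝ × ℝ → ℝ, c ∈ ℝ, and let P : (0,∞) → (0,∞) satisfy f(P(x), x) = c for all x > 0. Suppose that f is convex on the convex set (0,∞) × (0,∞) (jointly in both arguments), and that on (0,∞) × (0,∞), f is strictly decreasing in its first argument (for each fixed second argument) and strictly decreasing in its second argument (for each fixed first argument). Then P is strictly antitone and convex on (0,∞). -/
/-- Convex/decreasing variant of Proposition 1: if `f` is jointly convex on
`(0,∞) × (0,∞)` and strictly decreasing in both arguments there, and `P x` solves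
`f (P x, x) = c` for every `x > 0`, then the required power `P` is strictly antitone
and convex on `(0,∞)`. -/
theorem required_power_antitone_and_convex
    (f : ℝ × ℝ → ℝ) (c : ℝ) (P : ℝ → ℝ)
    (hPpos : ∀ x, 0 < x → 0 < P x)
    (hPc : ∀ x, 0 < x → f (P x, x) = c)
    (hconv : ConvexOn ℝ (Set.Ioi (0 : ℝ) ×ˢ Set.Ioi (0 : ℝ)) f)
    (hanti1 : ∀ y, 0 < y → ∀ p₁ p₂, 0 < p₁ → p₁ < p₂ → f (p₂, y) < f (p₁, y))
    (hanti2 : ∀ p, 0 < p → ∀ y₁ y₂, 0 < y₁ → y₁ < y₂ → f (p, y₂) < f (p, y₁)) :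
    StrictAntiOn P (Set.Ioi (0 : ℝ)) ∧ ConvexOn ℝ (Set.Ioi (0 : ℝ)) P := by
  constructor
  · intro x hx y hy hxy
    simp only [Set.mem_Ioi] at hx hy
    by_contra h
    push_neg at h
    have h1 : f (P x, y) < c := by
      rw [← hPc x hx]; exact hanti2 (P x) (hPpos x hx) x y hx hxy
    have h2 : c ≤ f (P x, y) := by
      rcases eq_or_lt_of_le h with heq | hlt
      · rw [← hPc y hy, ← heq]
      · rw [← hPc y hy]
        exact le_of_lt (hanti1 y hy _ _ (hPpos x hx) hlt)
    linarith
  · refine ⟨convex_Ioi 0, ?_⟩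
    intro x hx y hy a b ha hb hab
    simp only [Set.mem_Ioi] at hx hy
    simp only [smul_eq_mul]
    have hz : 0 < a * x + b * y := by
      have := (convex_Ioi (0:ℝ)) hx hy ha hb hab
      simpa using this
    have hQ : 0 < a * P x + b * P y := by
      have := (convex_Ioi (0:ℝ)) (hPpos x hx) (hPpos y hy) ha hb hab
      simpa using this
    have key := hconv.2 (show (P x, x) ∈ _ from ⟨hPpos x hx, hx⟩)
      (show (P y, y) ∈ _ from ⟨hPpos y hy, hy⟩) ha hb hab
    simp only [Prod.smul_mk, Prod.mk_add_mk, smul_eq_mul] at key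
    rw [hPc x hx, hPc y hy] at key
    have hc : a * c + b * c = c := by rw [← add_mul, hab, one_mul]
    rw [hc] at key
    by_contra h
    push_neg at h
    have := hanti1 (a * x + b * y) hz _ _ hQ h
    rw [hPc _ hz] at this
    linarith
end

section
/- Let K ≥ 1 and P : Fin K → ℕ → ℝ. For each k write Δₖ(n) = Pₖ(n) − Pₖ(n+1), and assume for all k and all n ≥ 1 that Δₖ(n) ≥ 0 (Condition 1) and Δₖ(n) ≥ Δₖ(n+1) (Condition 2). Let M ≥ K and let N* : Fin K → ℕ satisfy N*ₖ ≥ 1 for all k, ∑ₖ N*ₖ = M, and the greedy property: for all j, k with N*ₖ ≥ 2, Δₖ(N*ₖ − 1) ≥ Δⱼ(N*ⱼ). Then for every N' : Fin K → ℕ with N'ₖ ≥ 1 for all k and ∑ₖ N'ₖ ≤ M, it holds that ∑ₖ Pₖ(N*ₖ) ≤ ∑ₖ Pₖ(N'ₖ). -/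
open Finset

private lemma tele_sum (f : ℕ → ℝ) : ∀ a b : ℕ, a ≤ b →
    ∑ n ∈ Ico a b, (f n - f (n + 1)) = f a - f b := by
  intro a b hab
  induction b, hab using Nat.le_induction with
  | base => simp
  | succ b hb ih =>
    rw [Finset.sum_Ico_succ_top hb, ih]
    ring

private lemma delta_anti (f : ℕ → ℝ)
    (h2 : ∀ n : ℕ, 1 ≤ n → f (n + 1) - f (n + 2) ≤ f n - f (n + 1)) :
    ∀ a b : ℕ, 1 ≤ a → a ≤ b → f b - f (b + 1) ≤ f a - f (a + 1) := by
  intro a b ha hab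
  induction b, hab using Nat.le_induction with
  | base => exact le_rfl
  | succ b hb ih => exact le_trans (h2 b (ha.trans hb)) ih

/-- Optimality of the greedy bandwidth allocation algorithm (Table I, Appendix A):
under Condition 1 (nonnegative marginal power savings) and Condition 2 (nonincreasing
marginal power savings), any allocation `N*` with the greedy property minimizes the
total required transmit power among all allocations with at least one subcarrier per
user and at most `M` subcarriers in total. -/
theorem greedy_allocation_optimal
    (K : ℕ) (hK : 1 ≤ K) (P : Fin K → ℕ → ℝ)
    (hCond1 : ∀ k : Fin K, ∀ n : ℕ, 1 ≤ n → 0 ≤ P k n - P k (n + 1))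
    (hCond2 : ∀ k : Fin K, ∀ n : ℕ, 1 ≤ n →
      P k (n + 1) - P k (n + 2) ≤ P k n - P k (n + 1))
    (M : ℕ) (hM : K ≤ M)
    (Nstar : Fin K → ℕ)
    (hNstar1 : ∀ k, 1 ≤ Nstar k)
    (hNstarSum : ∑ k, Nstar k = M)
    (hGreedy : ∀ j k : Fin K, 2 ≤ Nstar k →
      P j (Nstar j) - P j (Nstar j + 1) ≤ P k (Nstar k - 1) - P k (Nstar k)) :
    ∀ N' : Fin K → ℕ, (∀ k, 1 ≤ N' k) → (∑ k, N' k) ≤ M →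
      ∑ k, P k (Nstar k) ≤ ∑ k, P k (N' k) := by
  intro N' hN'1 hN'sum
  have hKpos : 0 < K := hK
  haveI : Nonempty (Fin K) := Fin.pos_iff_nonempty.mp hKpos
  -- choose the user with maximal marginal saving at the greedy allocation
  obtain ⟨j₀, -, hj₀⟩ := Finset.exists_max_image (Finset.univ : Finset (Fin K))
    (fun j => P j (Nstar j) - P j (Nstar j + 1)) Finset.univ_nonempty
  set lam : ℝ := P j₀ (Nstar j₀) - P j₀ (Nstar j₀ + 1) with hlam
  have hlam_nonneg : 0 ≤ lam := hCond1 j₀ (Nstar j₀) (hNstar1 j₀)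
  have hlam_le : ∀ j, P j (Nstar j) - P j (Nstar j + 1) ≤ lam := fun j =>
    hj₀ j (Finset.mem_univ j)
  -- pointwise bound
  have key : ∀ k, P k (Nstar k) - P k (N' k) ≤ lam * ((N' k : ℝ) - (Nstar k : ℝ)) := by
    intro k
    rcases le_or_gt (Nstar k) (N' k) with h | h
    · rw [← tele_sum (P k) (Nstar k) (N' k) h]
      have hbound : ∀ n ∈ Ico (Nstar k) (N' k), P k n - P k (n + 1) ≤ lam := by
        intro n hn
        rw [Finset.mem_Ico] at hn
        exact le_trans
          (delta_anti (P k) (hCond2 k) (Nstar k) n (hNstar1 k) hn.1)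
          (hlam_le k)
      calc ∑ n ∈ Ico (Nstar k) (N' k), (P k n - P k (n + 1))
          ≤ ∑ _n ∈ Ico (Nstar k) (N' k), lam := Finset.sum_le_sum hbound
        _ = (N' k - Nstar k : ℕ) * lam := by
            rw [Finset.sum_const, Nat.card_Ico, nsmul_eq_mul]
        _ = lam * ((N' k : ℝ) - (Nstar k : ℝ)) := by
            rw [Nat.cast_sub h]; ring
    · -- N' k < Nstar k, so Nstar k ≥ 2
      have h2 : 2 ≤ Nstar k := by have := hN'1 k; omega
      have hpred : Nstar k - 1 + 1 = Nstar k := by omega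
      have hg : lam ≤ P k (Nstar k - 1) - P k (Nstar k) := hGreedy j₀ k h2
      have hbound : ∀ n ∈ Ico (N' k) (Nstar k), lam ≤ P k n - P k (n + 1) := by
        intro n hn
        rw [Finset.mem_Ico] at hn
        have h1n : 1 ≤ n := le_trans (hN'1 k) hn.1
        have hle : n ≤ Nstar k - 1 := by omega
        have hmono := delta_anti (P k) (hCond2 k) n (Nstar k - 1) h1n hle
        rw [hpred] at hmono
        exact le_trans hg hmono
      have hsum' : ((Nstar k - N' k : ℕ) : ℝ) * lam ≤ P k (N' k) - P k (Nstar k) := by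
        calc ((Nstar k - N' k : ℕ) : ℝ) * lam
            = ∑ _n ∈ Ico (N' k) (Nstar k), lam := by
              rw [Finset.sum_const, Nat.card_Ico, nsmul_eq_mul]
          _ ≤ ∑ n ∈ Ico (N' k) (Nstar k), (P k n - P k (n + 1)) :=
              Finset.sum_le_sum hbound
          _ = P k (N' k) - P k (Nstar k) := tele_sum (P k) _ _ h.le
      have hc : ((Nstar k - N' k : ℕ) : ℝ) = (Nstar k : ℝ) - N' k := Nat.cast_sub h.le
      rw [hc] at hsum'
      have heq : lam * ((N' k : ℝ) - (Nstar k : ℝ))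
          = -(((Nstar k : ℝ) - (N' k : ℝ)) * lam) := by ring
      rw [heq]
      linarith
  have hsum : ∑ k, (P k (Nstar k) - P k (N' k)) ≤ 0 := by
    calc ∑ k, (P k (Nstar k) - P k (N' k))
        ≤ ∑ k, lam * ((N' k : ℝ) - (Nstar k : ℝ)) := Finset.sum_le_sum fun k _ => key k
      _ = lam * ((∑ k, (N' k : ℝ)) - ∑ k, (Nstar k : ℝ)) := by
          rw [← Finset.sum_sub_distrib, ← Finset.mul_sum]
      _ ≤ 0 := by
          apply mul_nonpos_of_nonneg_of_nonpos hlam_nonneg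
          rw [sub_nonpos, ← Nat.cast_sum, ← Nat.cast_sum, Nat.cast_le, hNstarSum]
          exact hN'sum
  have := Finset.sum_sub_distrib (f := fun k => P k (Nstar k)) (g := fun k => P k (N' k))
    ▸ hsum
  linarith [this]
end

section
/- Let K ≥ 1 and P : Fin K → ℕ → ℝ. For each k write Δₖ(n) = Pₖ(n) − Pₖ(n+1), and assume for all k and all n ≥ 1 that Δₖ(n) ≥ Δₖ(n+1) (nonincreasing marginal savings). Let N* : Fin K → ℕ satisfy N*ₖ ≥ 1 for all k, Δₖ(N*ₖ − 1) ≥ 0 for every k with N*ₖ ≥ 2, and Δⱼ(N*ⱼ) ≤ 0 for every j. Then for every N' : Fin K → ℕ with N'ₖ ≥ 1 for all k, it holds that ∑ₖ Pₖ(N*ₖ) ≤ ∑ₖ Pₖ(N'ₖ). -/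
open Finset

/-- Early-stopping case of the greedy allocation (Lines 2–10 of Table II): with
nonincreasing marginal savings, if at `N*` every user with at least two subcarriers
had a nonnegative last marginal saving and no user has a positive marginal saving,
then `N*` minimizes the total power over all allocations with at least one
subcarrier per user. -/
theorem greedy_early_stop_optimal
    (K : ℕ) (hK : 1 ≤ K) (P : Fin K → ℕ → ℝ)
    (hCond2 : ∀ k : Fin K, ∀ n : ℕ, 1 ≤ n →
      P k (n + 1) - P k (n + 2) ≤ P k n - P k (n + 1))
    (Nstar : Fin K → ℕ)
    (hNstar1 : ∀ k, 1 ≤ Nstar k)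
    (hLast : ∀ k : Fin K, 2 ≤ Nstar k → 0 ≤ P k (Nstar k - 1) - P k (Nstar k))
    (hStop : ∀ j : Fin K, P j (Nstar j) - P j (Nstar j + 1) ≤ 0) :
    ∀ N' : Fin K → ℕ, (∀ k, 1 ≤ N' k) →
      ∑ k, P k (Nstar k) ≤ ∑ k, P k (N' k) := by
  -- marginal savings are nonincreasing
  have delta_mono : ∀ k : Fin K, ∀ a b : ℕ, 1 ≤ a → a ≤ b →
      P k b - P k (b + 1) ≤ P k a - P k (a + 1) := by
    intro k a b ha hab
    induction b, hab using Nat.le_induction with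
    | base => exact le_refl _
    | succ m hm ih =>
      have := hCond2 k m (le_trans ha hm)
      calc P k (m + 1) - P k (m + 2) ≤ P k m - P k (m + 1) := this
        _ ≤ _ := ih
  -- pointwise: P k (Nstar k) ≤ P k n for all n ≥ 1
  have pointwise : ∀ k : Fin K, ∀ n : ℕ, 1 ≤ n → P k (Nstar k) ≤ P k n := by
    intro k n hn
    rcases le_or_gt (Nstar k) n with h | h
    · -- n ≥ Nstar k
      clear hn
      induction n, h using Nat.le_induction with
      | base => exact le_refl _
      | succ m hm ih =>
        have h1 : P k m - P k (m + 1) ≤ P k (Nstar k) - P k (Nstar k + 1) :=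
          delta_mono k (Nstar k) m (hNstar1 k) hm
        have := hStop k
        linarith
    · -- n < Nstar k : P is nonincreasing on [1, Nstar k]
      have key : ∀ m : ℕ, n ≤ m → m ≤ Nstar k → P k m ≤ P k n := by
        intro m hm
        induction m, hm using Nat.le_induction with
        | base => intro _; exact le_refl _
        | succ m hm ih =>
          intro hms
          have h2 : 2 ≤ Nstar k := lt_of_lt_of_le (by omega) hms
          have hd : 0 ≤ P k m - P k (m + 1) := by
            have h1 : P k (Nstar k - 1) - P k (Nstar k - 1 + 1) ≤ P k m - P k (m + 1) :=
              delta_mono k m (Nstar k - 1) (le_trans hn hm) (by omega)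
            have h3 : Nstar k - 1 + 1 = Nstar k := by omega
            rw [h3] at h1
            exact le_trans (hLast k h2) h1
          have := ih (by omega)
          linarith
      have := key (Nstar k) (le_of_lt h) (le_refl _)
      exact this
  intro N' hN'
  exact Finset.sum_le_sum fun k _ => pointwise k (N' k) (hN' k)
end

section
/- Let K ≥ 1 and P : Fin K → ℕ → ℝ. For each k write Δₖ(n) = Pₖ(n) − Pₖ(n+1), and assume for all k and all n ≥ 1 that Δₖ(n) ≥ Δₖ(n+1) (nonincreasing marginal savings). Let M ≥ K and let N* : Fin K → ℕ satisfy: (i) N*ₖ ≥ 1 for all k and ∑ₖ N*ₖ ≤ M; (ii) for every k with N*ₖ ≥ 2 and every j, Δₖ(N*ₖ − 1) ≥ Δⱼ(N*ⱼ) and Δₖ(N*ₖ − 1) ≥ 0; (iii) either ∑ₖ N*ₖ = M, or Δⱼ(N*ⱼ) ≤ 0 for every j. Then for every N' : Fin K → ℕ with N'ₖ ≥ 1 for all k and ∑ₖ N'ₖ ≤ M, it holds that ∑ₖ Pₖ(N*ₖ) ≤ ∑ₖ Pₖ(N'ₖ). -/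
open Finset

lemma delta_mono' (P : ℕ → ℝ)
    (h : ∀ n, 1 ≤ n → P (n + 1) - P (n + 2) ≤ P n - P (n + 1))
    {m n : ℕ} (hm : 1 ≤ m) (hmn : m ≤ n) :
    P n - P (n + 1) ≤ P m - P (m + 1) := by
  induction n, hmn using Nat.le_induction with
  | base => exact le_refl _
  | succ n hn ih => exact le_trans (h n (hm.trans hn)) ih

lemma upper_bound' (P : ℕ → ℝ) (t : ℝ) {a b : ℕ} (hab : a ≤ b)
    (hd : ∀ n, a ≤ n → P n - P (n + 1) ≤ t) :
    P a - P b ≤ t * ((b : ℝ) - a) := by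
  induction b, hab using Nat.le_induction with
  | base => simp
  | succ b hb ih =>
    have h1 := hd b hb
    push_cast
    nlinarith [ih]

lemma lower_bound' (P : ℕ → ℝ) (t : ℝ) {a b : ℕ} (hab : b ≤ a)
    (hd : ∀ n, b ≤ n → n < a → t ≤ P n - P (n + 1)) :
    t * ((a : ℝ) - b) ≤ P b - P a := by
  induction a, hab using Nat.le_induction with
  | base => simp
  | succ a ha ih =>
    have h1 := hd a ha (Nat.lt_succ_self a)
    have ih' := ih (fun n hn hna => hd n hn (hna.trans (Nat.lt_succ_self a)))
    push_cast
    nlinarith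

lemma key_lemma (K : ℕ) (P : Fin K → ℕ → ℝ)
    (hCond2 : ∀ k : Fin K, ∀ n : ℕ, 1 ≤ n →
      P k (n + 1) - P k (n + 2) ≤ P k n - P k (n + 1))
    (Nstar N' : Fin K → ℕ)
    (h1 : ∀ k, 1 ≤ Nstar k) (h1' : ∀ k, 1 ≤ N' k)
    (t : ℝ)
    (hta : ∀ j, P j (Nstar j) - P j (Nstar j + 1) ≤ t)
    (htb : ∀ k, 2 ≤ Nstar k → t ≤ P k (Nstar k - 1) - P k (Nstar k))
    (htd : t * (((∑ k, N' k : ℕ) : ℝ) - ((∑ k, Nstar k : ℕ) : ℝ)) ≤ 0) :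
    ∑ k, P k (Nstar k) ≤ ∑ k, P k (N' k) := by
  have hk : ∀ k, P k (Nstar k) - P k (N' k) ≤ t * ((N' k : ℝ) - (Nstar k : ℝ)) := by
    intro k
    rcases le_or_gt (Nstar k) (N' k) with h | h
    · exact upper_bound' (P k) t h (fun n hn =>
        le_trans (delta_mono' (P k) (hCond2 k) (h1 k) hn) (hta k))
    · have h2 : 2 ≤ Nstar k := by have := h1' k; omega
      have hd : ∀ n, N' k ≤ n → n < Nstar k → t ≤ P k n - P k (n + 1) := by
        intro n hn hna
        have hn1 : 1 ≤ n := le_trans (h1' k) hn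
        have hle : n ≤ Nstar k - 1 := by omega
        have heq : Nstar k - 1 + 1 = Nstar k := by omega
        have := delta_mono' (P k) (hCond2 k) hn1 hle
        rw [heq] at this
        exact le_trans (htb k h2) this
      have := lower_bound' (P k) t h.le hd
      linarith
  have hsum : ∑ k, (P k (Nstar k) - P k (N' k)) ≤
      ∑ k, t * ((N' k : ℝ) - (Nstar k : ℝ)) :=
    Finset.sum_le_sum (fun k _ => hk k)
  rw [Finset.sum_sub_distrib] at hsum
  have : ∑ k, t * ((N' k : ℝ) - (Nstar k : ℝ)) =
      t * (((∑ k, N' k : ℕ) : ℝ) - ((∑ k, Nstar k : ℕ) : ℝ)) := by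
    rw [← Finset.mul_sum]
    push_cast
    rw [Finset.sum_sub_distrib]
  rw [this] at hsum
  linarith

/-- Proposition 2 (optimality of the algorithm in Table II, no power-cap case): under
Condition 2 (nonincreasing marginal savings), the greedy stopping point `N*` — which
either exhausts the budget `M` or stops when no marginal saving is positive, and
satisfies the greedy exchange property with nonnegative last savings — minimizes the
total power over all feasible integer allocations. -/
theorem greedy_allocation_optimal_with_stop
    (K : ℕ) (hK : 1 ≤ K) (P : Fin K → ℕ → ℝ)
    (hCond2 : ∀ k : Fin K, ∀ n : ℕ, 1 ≤ n →
      P k (n + 1) - P k (n + 2) ≤ P k n - P k (n + 1))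
    (M : ℕ) (hM : K ≤ M)
    (Nstar : Fin K → ℕ)
    (hNstar1 : ∀ k, 1 ≤ Nstar k)
    (hNstarSum : ∑ k, Nstar k ≤ M)
    (hGreedy : ∀ k : Fin K, 2 ≤ Nstar k → ∀ j : Fin K,
      P j (Nstar j) - P j (Nstar j + 1) ≤ P k (Nstar k - 1) - P k (Nstar k))
    (hLast : ∀ k : Fin K, 2 ≤ Nstar k → 0 ≤ P k (Nstar k - 1) - P k (Nstar k))
    (hStop : (∑ k, Nstar k = M) ∨ (∀ j : Fin K, P j (Nstar j) - P j (Nstar j + 1) ≤ 0)) :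
    ∀ N' : Fin K → ℕ, (∀ k, 1 ≤ N' k) → (∑ k, N' k) ≤ M →
      ∑ k, P k (Nstar k) ≤ ∑ k, P k (N' k) := by
  intro N' hN'1 hN'sum
  rcases hStop with heq | hle
  · haveI : Nonempty (Fin K) := ⟨⟨0, hK⟩⟩
    set t : ℝ := (Finset.univ.sup' Finset.univ_nonempty
      (fun j => P j (Nstar j) - P j (Nstar j + 1))) ⊔ 0 with ht
    refine key_lemma K P hCond2 Nstar N' hNstar1 hN'1 t ?_ ?_ ?_
    · intro j
      exact le_trans (Finset.le_sup' (fun j => P j (Nstar j) - P j (Nstar j + 1))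
        (Finset.mem_univ j)) le_sup_left
    · intro k h2
      refine sup_le ?_ (hLast k h2)
      exact Finset.sup'_le _ _ (fun j _ => hGreedy k h2 j)
    · have ht0 : 0 ≤ t := le_sup_right
      have hle' : ((∑ k, N' k : ℕ) : ℝ) ≤ ((∑ k, Nstar k : ℕ) : ℝ) := by
        exact_mod_cast heq ▸ hN'sum
      nlinarith
  · refine key_lemma K P hCond2 Nstar N' hNstar1 hN'1 0 hle
      (fun k h2 => hLast k h2) (by simp)
end

section
/- Let ν_a, ν_s, D > 0 be reals and ε ∈ (0, 1). Define θ = ν_s · log(ε) / (log(ε) − ν_a · D) (natural logarithm). Then 0 < θ < ν_s, and exp(−θ · (ν_a / (ν_s − θ)) · D) = ε. -/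
/-- The QoS exponent of a delay-sensitive service (equation (6)): with effective
bandwidth `ν_a / (ν_s − θ)`, the closed-form
`θ = ν_s · log ε / (log ε − ν_a · D)` satisfies `0 < θ < ν_s` and meets the queueing
requirement `exp (−θ · (ν_a / (ν_s − θ)) · D) = ε` exactly. -/
theorem qos_exponent_closed_form
    (νa νs D ε : ℝ) (hνa : 0 < νa) (hνs : 0 < νs) (hD : 0 < D)
    (hε0 : 0 < ε) (hε1 : ε < 1) :
    0 < νs * Real.log ε / (Real.log ε - νa * D) ∧
    νs * Real.log ε / (Real.log ε - νa * D) < νs ∧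
    Real.exp (-(νs * Real.log ε / (Real.log ε - νa * D)) *
        (νa / (νs - νs * Real.log ε / (Real.log ε - νa * D))) * D) = ε := by
  have hL : Real.log ε < 0 := Real.log_neg hε0 hε1
  have hd : Real.log ε - νa * D < 0 := by nlinarith
  have hd0 : Real.log ε - νa * D ≠ 0 := ne_of_lt hd
  have hlt : νs * Real.log ε / (Real.log ε - νa * D) < νs := by
    rw [div_lt_iff_of_neg hd]; nlinarith [mul_pos (mul_pos hνa hD) hνs]
  refine ⟨div_pos_of_neg_of_neg (by nlinarith) hd, hlt, ?_⟩
  have hd2 : νa * D - Real.log ε ≠ 0 := by nlinarith [mul_pos hνa hD]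
  rw [show νs - νs * Real.log ε / (Real.log ε - νa * D)
        = νs * (νa * D) / (νa * D - Real.log ε) by
      field_simp
      ring]
  rw [show -(νs * Real.log ε / (Real.log ε - νa * D)) *
        (νa / (νs * (νa * D) / (νa * D - Real.log ε))) * D = Real.log ε by
      field_simp
      ring, Real.exp_log hε0]
end

section
/- Let P : ℕ → ℝ satisfy P(n) − P(n+1) ≥ P(n+1) − P(n+2) for all n ≥ 1 (nonincreasing marginal savings), let c > 0, and suppose n₀ ≥ 1 satisfies P(n₀) − P(n₀ + 1) ≤ c. Then for all n, m with n₀ ≤ n ≤ m: P(n) + c·n ≤ P(m) + c·m. -/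
/-- Appendix C claim: with nonincreasing marginal transmit-power savings, once the
marginal saving drops to at most the per-subcarrier circuit cost `c`, the total power
`P n + c·n` is nondecreasing in the number of subcarriers from that point on. -/
theorem total_power_nondecreasing_after_stop
    (P : ℕ → ℝ)
    (hCond2 : ∀ n : ℕ, 1 ≤ n → P (n + 1) - P (n + 2) ≤ P n - P (n + 1))
    (c : ℝ) (hc : 0 < c)
    (n₀ : ℕ) (hn₀ : 1 ≤ n₀) (hstop : P n₀ - P (n₀ + 1) ≤ c) :
    ∀ n m : ℕ, n₀ ≤ n → n ≤ m → P n + c * n ≤ P m + c * m := by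
  have key : ∀ n, n₀ ≤ n → P n - P (n + 1) ≤ c := by
    intro n hn
    induction n with
    | zero => omega
    | succ k ih =>
      rcases Nat.lt_or_ge n₀ (k + 1) with h | h
      · have hk : n₀ ≤ k := by omega
        have := hCond2 k (le_trans hn₀ hk)
        exact le_trans this (ih hk)
      · have : n₀ = k + 1 := by omega
        rw [← this]; exact hstop
  intro n m hn hnm
  induction m with
  | zero => interval_cases n; simpa using hnm ▸ le_refl _
  | succ k ih =>
    rcases Nat.lt_or_ge n (k + 1) with h | h
    · have hk : n ≤ k := by omega
      refine le_trans (ih hk) ?_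
      have := key k (le_trans hn hk)
      push_cast
      linarith
    · have : n = k + 1 := by omega
      rw [this]
end
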